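/- arXiv:1309.2421 — 4 statements merged into one kernel-verified Lean document; each statement's English description precedes it below -/
import Mathlib

section
/- For n ≥ 2, λ ∈ ℂ with λ ≠ 0, and 1 ≤ l ≤ n−1, the matrix (J_{n,λ}⁻¹ − (1/λ)·I_n)^l equals ((−1)^l / λ^{2l})·M_n^l plus a ℂ-linear combination of the higher powers M_n^{l+1}, …, M_n^{n−1}; that is, there exist coefficients c_{l+1}, …, c_{n−1} ∈ ℂ with (J_{n,λ}⁻¹ − (1/λ)·I_n)^l = ((−1)^l / λ^{2l})·M_n^l + Σ_{j=l+1}^{n−1} c_j·M_n^j. -/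
/-!
Write `N = M_n`, so `N ^ n = 0` and `J = λ • (1 + λ⁻¹ • N)`. A truncated geometric series gives
`J⁻¹ = p(N)` for a polynomial `p` with constant term `λ⁻¹`, and `λ J⁻¹ + N J⁻¹ = 1` turns
`J⁻¹ - λ⁻¹` into `-λ⁻¹ N p(N) = N q(N)` with `q(0) = -λ⁻²`. Hence the `l`-th power is `N^l q(N)^l`,
whose expansion in powers of `N` starts with `q(0)^l N^l = (-1)^l λ^{-2l} N^l`.
-/

open Matrix

/-- The `n × n` nilpotent Jordan block over `ℂ`: `1`s on the superdiagonal, `0` elsewhere. -/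
def Mblock (n : ℕ) : Matrix (Fin n) (Fin n) ℂ :=
  Matrix.of fun i j => if (j : ℕ) = (i : ℕ) + 1 then 1 else 0

/-- The Jordan cell `J_{n,λ} = λ·I_n + M_n`. -/
def Jcell (n : ℕ) (lam : ℂ) : Matrix (Fin n) (Fin n) ℂ :=
  lam • (1 : Matrix (Fin n) (Fin n) ℂ) + Mblock n

open Polynomial Finset

section
variable {R A : Type*} [CommSemiring R] [Semiring A] [Algebra R A]

theorem aeval_eq_sum_range_of_pow_eq_zero {x : A} {n : ℕ} (hx : x ^ n = 0) (p : R[X]) :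
    aeval x p = ∑ j ∈ range n, p.coeff j • x ^ j := by
  rw [aeval_eq_sum_range' (n := max n (p.natDegree + 1)) (by omega)]
  refine (sum_subset (range_subset_range.2 (le_max_left _ _)) fun j _ hj => ?_).symm
  rw [pow_eq_zero_of_le (by simpa using hj) hx, smul_zero]

theorem aeval_X_pow_mul_of_pow_eq_zero {x : A} {n l : ℕ} (hx : x ^ n = 0) (hl : l < n)
    (q : R[X]) :
    aeval x (X ^ l * q) =
      q.coeff 0 • x ^ l + ∑ j ∈ Ico (l + 1) n, (X ^ l * q).coeff j • x ^ j := by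
  have hlow : ∑ j ∈ range l, (X ^ l * q).coeff j • x ^ j = 0 :=
    sum_eq_zero fun j hj => by
      rw [coeff_X_pow_mul', if_neg (by simpa using hj), zero_smul]
  rw [aeval_eq_sum_range_of_pow_eq_zero hx, ← sum_range_add_sum_Ico _ hl.le, hlow, zero_add,
    sum_eq_sum_Ico_succ_bot hl, coeff_X_pow_mul', if_pos le_rfl, Nat.sub_self]

end

section
variable {K A : Type*} [Field K] [Ring A] [Algebra K A]

theorem IsNilpotent.exists_coeff_zero_and_mul_aeval_eq_one {x : A} (hx : IsNilpotent x)
    {lam : K} (hlam : lam ≠ 0) :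
    ∃ p : K[X], p.coeff 0 = lam⁻¹ ∧ (lam • (1 : A) + x) * aeval x p = 1 := by
  obtain ⟨n, hn⟩ := hx
  set y : K[X] := C (-lam⁻¹) * X with hy_def
  -- `n + 1` terms rather than `n`, so that the constant term is `λ⁻¹` even when `n = 0`.
  have hgeom : (C lam + X) * (C lam⁻¹ * ∑ k ∈ range (n + 1), y ^ k) = 1 - y ^ (n + 1) := by
    rw [← mul_neg_geom_sum, ← mul_assoc]
    congr 1
    rw [mul_comm, mul_add, ← C_mul, inv_mul_cancel₀ hlam, C_1, hy_def, C_neg]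
    ring
  refine ⟨C lam⁻¹ * ∑ k ∈ range (n + 1), y ^ k, ?_, ?_⟩
  · simp [coeff_zero_eq_eval_zero, y, eval_finsetSum]
  · have hy : aeval x (y ^ (n + 1)) = 0 := by
      rw [map_pow, map_mul, aeval_C, aeval_X, (Algebra.commute_algebraMap_left _ x).mul_pow,
        _root_.pow_succ x, hn, zero_mul, mul_zero]
    simpa [hy, Algebra.algebraMap_eq_smul_one] using congr_arg (aeval x) hgeom

theorem exists_aeval_sub_inv_pow_eq {x : A} {n l : ℕ} (hx : x ^ n = 0) (hl : l < n)
    {lam : K} (hlam : lam ≠ 0) {p : K[X]} (hp0 : p.coeff 0 = lam⁻¹)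
    (hp : (lam • (1 : A) + x) * aeval x p = 1) :
    ∃ c : ℕ → K, (aeval x p - lam⁻¹ • (1 : A)) ^ l =
      ((-1) ^ l / lam ^ (2 * l)) • x ^ l + ∑ j ∈ Ico (l + 1) n, c j • x ^ j := by
  set q : K[X] := C (-lam⁻¹) * p
  have hsub : aeval x p - lam⁻¹ • (1 : A) = aeval x (X * q) := by
    rw [add_mul, smul_mul_assoc, one_mul, ← eq_sub_iff_add_eq'] at hp
    rw [map_mul, map_mul, aeval_X, aeval_C, Algebra.algebraMap_eq_smul_one, smul_one_mul,
      mul_smul_comm, hp, smul_sub, smul_smul, neg_mul, inv_mul_cancel₀ hlam]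
    module
  have hq0 : (q ^ l).coeff 0 = (-1) ^ l / lam ^ (2 * l) := by
    rw [coeff_zero_eq_eval_zero, eval_pow, ← coeff_zero_eq_eval_zero, coeff_C_mul, hp0,
      div_eq_mul_inv, ← inv_pow]
    ring
  refine ⟨fun j => (X ^ l * q ^ l).coeff j, ?_⟩
  rw [hsub, ← map_pow, mul_pow, aeval_X_pow_mul_of_pow_eq_zero hx hl, hq0]
end

theorem Mblock_pow_apply (n k : ℕ) (i j : Fin n) :
    (Mblock n ^ k) i j = if (j : ℕ) = i + k then 1 else 0 := by
  induction k generalizing i with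
  | zero => simp [one_apply, Fin.ext_iff, eq_comm]
  | succ k ih =>
    rw [pow_succ', mul_apply]
    simp only [ih]
    simp only [Mblock, of_apply, ite_mul, one_mul, zero_mul]
    by_cases hi : (i : ℕ) + 1 < n
    · rw [sum_eq_single ⟨i + 1, hi⟩ (fun x _ hx => if_neg fun h => hx (Fin.ext h))
        (fun h => absurd (mem_univ _) h)]
      simp [add_right_comm, add_assoc]
    · rw [sum_eq_zero fun x _ => if_neg (by omega), if_neg (by omega)]

theorem Mblock_pow_self (n : ℕ) : Mblock n ^ n = 0 := by
  ext i j
  rw [Mblock_pow_apply, if_neg (by omega), Matrix.zero_apply]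

theorem Jcell_inv_sub_pow_general (n : ℕ) (hn : 2 ≤ n) (lam : ℂ) (hlam : lam ≠ 0)
    (l : ℕ) (hl2 : l ≤ n - 1) :
    ∃ c : ℕ → ℂ,
      ((Jcell n lam)⁻¹ - lam⁻¹ • (1 : Matrix (Fin n) (Fin n) ℂ)) ^ l =
        ((-1 : ℂ) ^ l / lam ^ (2 * l)) • (Mblock n) ^ l +
          ∑ j ∈ Finset.Ico (l + 1) n, c j • (Mblock n) ^ j := by
  obtain ⟨p, hp0, hp⟩ :=
    IsNilpotent.exists_coeff_zero_and_mul_aeval_eq_one ⟨n, Mblock_pow_self n⟩ hlam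
  rw [Jcell, Matrix.inv_eq_right_inv hp]
  exact exists_aeval_sub_inv_pow_eq (Mblock_pow_self n) (by omega) hlam hp0 hp

/-- For `n ≥ 2`, `λ ≠ 0` and `1 ≤ l ≤ n - 1`, the matrix `(J_{n,λ}⁻¹ - (1/λ)·I)^l` equals
`((-1)^l / λ^{2l}) · M_n^l` plus a linear combination of higher powers of `M_n`. -/
theorem Jcell_inv_sub_pow (n : ℕ) (hn : 2 ≤ n) (lam : ℂ) (hlam : lam ≠ 0)
    (l : ℕ) (hl1 : 1 ≤ l) (hl2 : l ≤ n - 1) :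
    ∃ c : ℕ → ℂ,
      ((Jcell n lam)⁻¹ - lam⁻¹ • (1 : Matrix (Fin n) (Fin n) ℂ)) ^ l =
        ((-1 : ℂ) ^ l / lam ^ (2 * l)) • (Mblock n) ^ l +
          ∑ j ∈ Finset.Ico (l + 1) n, c j • (Mblock n) ^ j :=
  Jcell_inv_sub_pow_general n hn lam hlam l hl2
end

section
/- For n ≥ 1, λ ∈ ℂ with λ ≠ 0, and every k ≥ 0, the ranks satisfy rank((J_{n,λ} − λ·I_n)^k) = rank((J_{n,λ}⁻¹ − (1/λ)·I_n)^k). In particular, for 1 ≤ k ≤ n−1 both ranks are nonzero, and both are 0 for k = n. -/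
open Matrix

/-!
For an invertible `A` and `c ≠ 0` we have `A⁻¹ - c⁻¹ • 1 = (-c⁻¹ • A⁻¹) * (A - c • 1)`, a product
of two commuting factors of which the first is invertible. Hence the `k`-th powers of `A - c • 1`
and `A⁻¹ - c⁻¹ • 1` differ by an invertible factor and have the same rank. For the Jordan cell,
`J_{n,λ} - λ • 1 = M_n`, and `M_n ^ k` is the shift by `k`, which is nonzero exactly when `k < n`.
-/

namespace Matrix

variable {m n K : Type*} [Fintype n] [DecidableEq n] [Field K]

theorem rank_eq_zero_iff {A : Matrix m n K} : A.rank = 0 ↔ A = 0 := by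
  rw [rank, Submodule.finrank_eq_zero, LinearMap.range_eq_bot, ← toLin'_apply',
    LinearEquiv.map_eq_zero_iff]

theorem inv_sub_smul_one_eq_mul {A : Matrix n n K} (hA : IsUnit A.det) {c : K} (hc : c ≠ 0) :
    A⁻¹ - c⁻¹ • 1 = (-c⁻¹ • A⁻¹) * (A - c • 1) := by
  rw [mul_sub, smul_mul, nonsing_inv_mul A hA, smul_mul, mul_smul_comm, mul_one, smul_smul,
    neg_mul, inv_mul_cancel₀ hc, neg_smul, neg_smul, one_smul]
  abel

theorem rank_pow_inv_sub_smul_one {A : Matrix n n K} (hA : IsUnit A.det) {c : K} (hc : c ≠ 0)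
    (k : ℕ) : ((A⁻¹ - c⁻¹ • 1) ^ k).rank = ((A - c • 1) ^ k).rank := by
  have hcomm : Commute (-c⁻¹ • A⁻¹) (A - c • 1) :=
    ((show Commute A⁻¹ A from (nonsing_inv_mul A hA).trans (mul_nonsing_inv A hA).symm).sub_right
      ((Commute.one_right _).smul_right _)).smul_left _
  have hdet : IsUnit ((-c⁻¹ • A⁻¹) ^ k).det := by
    rw [det_pow, det_smul]
    exact (((isUnit_iff_ne_zero.mpr (by simpa using hc)).pow _).mul
      (isUnit_nonsing_inv_det A hA)).pow k
  rw [inv_sub_smul_one_eq_mul hA hc, hcomm.mul_pow, rank_mul_eq_right_of_isUnit_det _ _ hdet]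

end Matrix

theorem Mblock_pow (n k : ℕ) :
    Mblock n ^ k = Matrix.of fun i j : Fin n => if (j : ℕ) = i + k then 1 else 0 := by
  induction k with
  | zero => ext i j; simp [one_apply, Fin.ext_iff, eq_comm]
  | succ k ih =>
    ext i j
    rw [pow_succ, ih, mul_apply]
    simp only [Mblock, of_apply, ite_mul, one_mul, zero_mul]
    rw [Fin.sum_univ_eq_sum_range (fun l => if l = (i : ℕ) + k then
      (if (j : ℕ) = l + 1 then (1 : ℂ) else 0) else 0), Finset.sum_ite_eq']
    simp only [Finset.mem_range]
    have := j.isLt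
    split_ifs <;> first | rfl | omega

theorem Mblock_pow_eq_zero_iff {n k : ℕ} : Mblock n ^ k = 0 ↔ n ≤ k := by
  rw [Mblock_pow]
  constructor
  · intro h
    by_contra! hk
    simpa using congr_fun₂ h ⟨0, by omega⟩ ⟨k, hk⟩
  · intro hk
    ext i j
    simp only [of_apply, Matrix.zero_apply, ite_eq_right_iff]
    omega

theorem Jcell_sub_smul_one (n : ℕ) (lam : ℂ) : Jcell n lam - lam • 1 = Mblock n := by
  simp [Jcell]

theorem isUnit_Jcell (n : ℕ) {lam : ℂ} (hlam : lam ≠ 0) : IsUnit (Jcell n lam) := by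
  have hscalar : IsUnit (lam • (1 : Matrix (Fin n) (Fin n) ℂ)) := by
    rw [← Algebra.algebraMap_eq_smul_one]
    exact hlam.isUnit.map _
  exact IsNilpotent.isUnit_add_left_of_commute ⟨n, Mblock_pow_eq_zero_iff.mpr le_rfl⟩ hscalar
    ((Commute.one_right _).smul_right _)

theorem Jcell_pow_rank_eq_inv_pow_rank_general (n : ℕ) (lam : ℂ) (hlam : lam ≠ 0) :
    (∀ k : ℕ,
        ((Jcell n lam - lam • (1 : Matrix (Fin n) (Fin n) ℂ)) ^ k).rank =
          (((Jcell n lam)⁻¹ - lam⁻¹ • (1 : Matrix (Fin n) (Fin n) ℂ)) ^ k).rank) ∧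
      (∀ k : ℕ, 1 ≤ k → k ≤ n - 1 →
        ((Jcell n lam - lam • (1 : Matrix (Fin n) (Fin n) ℂ)) ^ k).rank ≠ 0 ∧
          (((Jcell n lam)⁻¹ - lam⁻¹ • (1 : Matrix (Fin n) (Fin n) ℂ)) ^ k).rank ≠ 0) ∧
      ((Jcell n lam - lam • (1 : Matrix (Fin n) (Fin n) ℂ)) ^ n).rank = 0 ∧
        (((Jcell n lam)⁻¹ - lam⁻¹ • (1 : Matrix (Fin n) (Fin n) ℂ)) ^ n).rank = 0 := by
  have hdet : IsUnit (Jcell n lam).det := (isUnit_iff_isUnit_det _).mp (isUnit_Jcell n hlam)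
  have hrank (k : ℕ) : (((Jcell n lam)⁻¹ - lam⁻¹ • 1) ^ k).rank = (Mblock n ^ k).rank := by
    rw [rank_pow_inv_sub_smul_one hdet hlam, Jcell_sub_smul_one]
  simp only [hrank, Jcell_sub_smul_one, Ne, Matrix.rank_eq_zero_iff, Mblock_pow_eq_zero_iff]
  exact ⟨fun _ => trivial, fun k hk₁ hk₂ => ⟨by omega, by omega⟩, le_rfl, le_rfl⟩

/-- For `λ ≠ 0` and every `k`, `rank((J_{n,λ} - λ·I)^k) = rank((J_{n,λ}⁻¹ - (1/λ)·I)^k)`;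
in particular both ranks are nonzero for `1 ≤ k ≤ n - 1` and both vanish for `k = n`. -/
theorem Jcell_pow_rank_eq_inv_pow_rank (n : ℕ) (hn : 1 ≤ n) (lam : ℂ) (hlam : lam ≠ 0) :
    (∀ k : ℕ,
        ((Jcell n lam - lam • (1 : Matrix (Fin n) (Fin n) ℂ)) ^ k).rank =
          (((Jcell n lam)⁻¹ - lam⁻¹ • (1 : Matrix (Fin n) (Fin n) ℂ)) ^ k).rank) ∧
      (∀ k : ℕ, 1 ≤ k → k ≤ n - 1 →
        ((Jcell n lam - lam • (1 : Matrix (Fin n) (Fin n) ℂ)) ^ k).rank ≠ 0 ∧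
          (((Jcell n lam)⁻¹ - lam⁻¹ • (1 : Matrix (Fin n) (Fin n) ℂ)) ^ k).rank ≠ 0) ∧
      ((Jcell n lam - lam • (1 : Matrix (Fin n) (Fin n) ℂ)) ^ n).rank = 0 ∧
        (((Jcell n lam)⁻¹ - lam⁻¹ • (1 : Matrix (Fin n) (Fin n) ℂ)) ^ n).rank = 0 :=
  Jcell_pow_rank_eq_inv_pow_rank_general n lam hlam
end

section
/- (Lemma 6, part i, cell case) For n ≥ 1 and λ ∈ ℂ with λ ≠ 0, the 2n×2n block-diagonal matrix with diagonal blocks J_{n,λ} and J_{n,λ}⁻¹ is similar to the block-diagonal matrix with diagonal blocks J_{n,λ} and J_{n,1/λ}: there exists an invertible Q ∈ M_{2n}(ℂ) with Q · (J_{n,λ} ⊕ J_{n,λ}⁻¹) · Q⁻¹ = J_{n,λ} ⊕ J_{n,1/λ}. -/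
open Matrix

namespace JordanAux

variable (n : ℕ) (lam : ℂ)

/-- Explicit inverse of the Jordan cell. -/
noncomputable def Binv : Matrix (Fin n) (Fin n) ℂ :=
  Matrix.of fun i j => if (i : ℕ) ≤ (j : ℕ) then lam⁻¹ * (-lam⁻¹) ^ ((j : ℕ) - (i : ℕ)) else 0

/-- The nilpotent part of `Binv`. -/
noncomputable def Nmat : Matrix (Fin n) (Fin n) ℂ :=
  Matrix.of fun i j => if (i : ℕ) < (j : ℕ) then lam⁻¹ * (-lam⁻¹) ^ ((j : ℕ) - (i : ℕ)) else 0

lemma Binv_eq : Binv n lam = lam⁻¹ • (1 : Matrix (Fin n) (Fin n) ℂ) + Nmat n lam := by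
  ext i j
  simp only [Binv, Nmat, Matrix.add_apply, Matrix.smul_apply, Matrix.one_apply, Matrix.of_apply]
  rcases lt_trichotomy (i : ℕ) (j : ℕ) with h | h | h
  · have hne : ¬ (i = j) := fun hij => by subst hij; exact lt_irrefl _ h
    rw [if_pos h.le, if_pos h, if_neg hne, smul_zero, zero_add]
  · have hij : i = j := Fin.ext h
    subst hij
    simp [h]
  · have hne : ¬ (i = j) := fun hij => by subst hij; exact lt_irrefl _ h
    rw [if_neg (by omega), if_neg hne, if_neg (by omega)]
    simp

lemma Mblock_mul_apply (A : Matrix (Fin n) (Fin n) ℂ) (i k : Fin n) :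
    (Mblock n * A) i k = if h : (i : ℕ) + 1 < n then A ⟨(i : ℕ) + 1, h⟩ k else 0 := by
  rw [Matrix.mul_apply]
  by_cases h : (i : ℕ) + 1 < n
  · rw [dif_pos h, Finset.sum_eq_single (⟨(i : ℕ) + 1, h⟩ : Fin n)]
    · simp [Mblock]
    · intro b _ hb
      have : (b : ℕ) ≠ (i : ℕ) + 1 := fun hb' => hb (Fin.ext hb')
      simp [Mblock, this]
    · simp
  · rw [dif_neg h]
    apply Finset.sum_eq_zero
    intro b _
    have : (b : ℕ) ≠ (i : ℕ) + 1 := by have := b.isLt; omega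
    simp [Mblock, this]

lemma mul_Mblock_apply (A : Matrix (Fin n) (Fin n) ℂ) (i k : Fin n) :
    (A * Mblock n) i k =
      if 0 < (k : ℕ) then A i ⟨(k : ℕ) - 1, lt_of_le_of_lt (Nat.sub_le _ _) k.isLt⟩ else 0 := by
  rw [Matrix.mul_apply]
  by_cases h : 0 < (k : ℕ)
  · rw [if_pos h, Finset.sum_eq_single (⟨(k : ℕ) - 1, lt_of_le_of_lt (Nat.sub_le _ _) k.isLt⟩ : Fin n)]
    · have : (k : ℕ) = ((k : ℕ) - 1) + 1 := by omega
      simp [Mblock, ← this]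
    · intro b _ hb
      have : (k : ℕ) ≠ (b : ℕ) + 1 := by
        intro hk
        exact hb (Fin.ext (show (b : ℕ) = (k : ℕ) - 1 by omega))
      simp [Mblock, this]
    · simp
  · rw [if_neg h]
    apply Finset.sum_eq_zero
    intro b _
    have : (k : ℕ) ≠ (b : ℕ) + 1 := by omega
    simp [Mblock, this]

lemma Jcell_mul_Binv (hlam : lam ≠ 0) : Jcell n lam * Binv n lam = 1 := by
  have hinv : lam * lam⁻¹ = 1 := mul_inv_cancel₀ hlam
  ext i k
  rw [Jcell, Matrix.add_mul, Matrix.smul_mul, Matrix.one_mul, Matrix.add_apply,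
    Matrix.smul_apply, Mblock_mul_apply]
  rcases lt_trichotomy (i : ℕ) (k : ℕ) with h | h | h
  · have h1 : (i : ℕ) + 1 < n := by have := k.isLt; omega
    rw [dif_pos h1]
    simp only [Binv, Matrix.of_apply, smul_eq_mul]
    rw [if_pos h.le, if_pos (by omega)]
    have hne : i ≠ k := fun hik => by simp [hik] at h
    rw [Matrix.one_apply_ne hne]
    have hexp : (k : ℕ) - (i : ℕ) = ((k : ℕ) - ((i : ℕ) + 1)) + 1 := by omega
    rw [hexp, pow_succ]
    field_simp
    ring
  · have hik : i = k := Fin.ext h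
    subst hik
    simp only [Binv, Matrix.of_apply, smul_eq_mul]
    rw [if_pos le_rfl, Nat.sub_self, pow_zero, mul_one, Matrix.one_apply_eq]
    by_cases h1 : (i : ℕ) + 1 < n
    · rw [dif_pos h1, if_neg (by omega)]
      simp [hinv]
    · rw [dif_neg h1]
      simp [hinv]
  · have hne : i ≠ k := fun hik => by simp [hik] at h
    rw [Matrix.one_apply_ne hne]
    simp only [Binv, Matrix.of_apply, smul_eq_mul]
    rw [if_neg (by omega)]
    by_cases h1 : (i : ℕ) + 1 < n
    · rw [dif_pos h1, if_neg (by omega)]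
      simp
    · rw [dif_neg h1]; simp

lemma Binv_eq_inv (hlam : lam ≠ 0) : (Jcell n lam)⁻¹ = Binv n lam :=
  Matrix.inv_eq_right_inv (Jcell_mul_Binv n lam hlam)

end JordanAux

namespace JordanAux2
open JordanAux

variable (n : ℕ) (lam : ℂ)

lemma Npow_apply_zero (j : ℕ) (i l : Fin n) (h : (l : ℕ) < (i : ℕ) + j) :
    (Nmat n lam ^ j) i l = 0 := by
  induction j generalizing l with
  | zero =>
    rw [pow_zero]
    exact Matrix.one_apply_ne (fun hil => by subst hil; omega)
  | succ j ih =>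
    rw [pow_succ, Matrix.mul_apply]
    apply Finset.sum_eq_zero
    intro m _
    by_cases hm : (m : ℕ) < (i : ℕ) + j
    · rw [ih m hm, zero_mul]
    · have hml : ¬ ((m : ℕ) < (l : ℕ)) := by omega
      have hz : Nmat n lam m l = 0 := by simp only [Nmat, Matrix.of_apply, if_neg hml]
      rw [hz, mul_zero]

lemma Npow_apply_diag (j : ℕ) (i l : Fin n) (h : (l : ℕ) = (i : ℕ) + j) :
    (Nmat n lam ^ j) i l = (-(lam⁻¹ * lam⁻¹)) ^ j := by
  induction j generalizing i l with
  | zero =>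
    have hil : i = l := Fin.ext (by omega)
    subst hil
    simp
  | succ j ih =>
    rw [pow_succ, Matrix.mul_apply]
    have him : (i : ℕ) + j < n := by have := l.isLt; omega
    rw [Finset.sum_eq_single (⟨(i : ℕ) + j, him⟩ : Fin n)]
    · rw [ih i ⟨(i : ℕ) + j, him⟩ rfl]
      have hcond : ((⟨(i : ℕ) + j, him⟩ : Fin n) : ℕ) < (l : ℕ) := by simp; omega
      have hexp : (l : ℕ) - ((⟨(i : ℕ) + j, him⟩ : Fin n) : ℕ) = 1 := by simp; omega
      simp only [Nmat, Matrix.of_apply, if_pos hcond, hexp, pow_one, pow_succ]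
      ring
    · intro b _ hb
      by_cases hblt : (b : ℕ) < (i : ℕ) + j
      · rw [Npow_apply_zero n lam j i b hblt, zero_mul]
      · have hb' : (b : ℕ) ≠ (i : ℕ) + j := fun h' => hb (Fin.ext (by simpa using h'))
        have hml : ¬ ((b : ℕ) < (l : ℕ)) := by omega
        have hz : Nmat n lam b l = 0 := by simp only [Nmat, Matrix.of_apply, if_neg hml]
        rw [hz, mul_zero]
    · simp

/-- Change of basis matrix: columns are `N^(n-1-k) e_(n-1)`. -/
noncomputable def Pmat (hn : 0 < n) : Matrix (Fin n) (Fin n) ℂ :=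
  Matrix.of fun i k => (Nmat n lam ^ (n - 1 - (k : ℕ))) i ⟨n - 1, by omega⟩

variable (hn : 0 < n)

lemma Pmat_tri (i k : Fin n) (h : k < i) : Pmat n lam hn i k = 0 := by
  apply Npow_apply_zero
  have := i.isLt
  have := k.isLt
  have : (k : ℕ) < (i : ℕ) := h
  simp; omega

lemma Pmat_diag (i : Fin n) : Pmat n lam hn i i = (-(lam⁻¹ * lam⁻¹)) ^ (n - 1 - (i : ℕ)) := by
  apply Npow_apply_diag
  have := i.isLt
  simp; omega

lemma Pmat_det_ne (hlam : lam ≠ 0) : (Pmat n lam hn).det ≠ 0 := by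
  have htri : (Pmat n lam hn).BlockTriangular id := by
    intro i j hij
    exact Pmat_tri n lam hn i j hij
  rw [Matrix.det_of_upperTriangular htri]
  apply Finset.prod_ne_zero_iff.mpr
  intro i _
  rw [Pmat_diag]
  apply pow_ne_zero
  simp [hlam]

lemma Binv_mul_Pmat : Binv n lam * Pmat n lam hn = Pmat n lam hn * Jcell n lam⁻¹ := by
  rw [Binv_eq, Matrix.add_mul, Matrix.smul_mul, Matrix.one_mul]
  rw [Jcell, Matrix.mul_add, Matrix.mul_smul, Matrix.mul_one]
  congr 1
  ext i k
  have hL : (Nmat n lam * Pmat n lam hn) i k =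
      (Nmat n lam ^ (n - 1 - (k : ℕ) + 1)) i ⟨n - 1, by omega⟩ := by
    rw [pow_succ', Matrix.mul_apply, Matrix.mul_apply]
    rfl
  rw [hL, mul_Mblock_apply]
  by_cases hk : 0 < (k : ℕ)
  · rw [if_pos hk]
    have hkk := k.isLt
    have hexp : n - 1 - (k : ℕ) + 1 = n - 1 - ((k : ℕ) - 1) := by omega
    rw [hexp]
    rfl
  · rw [if_neg hk]
    have hk0 : (k : ℕ) = 0 := by omega
    have hexp : n - 1 - (k : ℕ) + 1 = n := by omega
    rw [hexp]
    apply Npow_apply_zero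
    have := Fin.is_lt i
    simp; omega

end JordanAux2

/-- (Lemma 6, part i, cell case) For `λ ≠ 0`, the block-diagonal matrix
`J_{n,λ} ⊕ J_{n,λ}⁻¹` is similar to `J_{n,λ} ⊕ J_{n,1/λ}`. -/
theorem blockDiag_jcell_inv_similar (n : ℕ) (hn : 1 ≤ n) (lam : ℂ) (hlam : lam ≠ 0) :
    ∃ Q : GL (Fin n ⊕ Fin n) ℂ,
      (Q : Matrix (Fin n ⊕ Fin n) (Fin n ⊕ Fin n) ℂ) *
          Matrix.fromBlocks (Jcell n lam) 0 0 ((Jcell n lam)⁻¹) *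
          ((Q⁻¹ : GL (Fin n ⊕ Fin n) ℂ) : Matrix (Fin n ⊕ Fin n) (Fin n ⊕ Fin n) ℂ) =
        Matrix.fromBlocks (Jcell n lam) 0 0 (Jcell n lam⁻¹) := by
  have hn0 : 0 < n := hn
  set P := JordanAux2.Pmat n lam hn0 with hP
  have hdet : IsUnit P.det := isUnit_iff_ne_zero.mpr (JordanAux2.Pmat_det_ne n lam hn0 hlam)
  have h1 : P * P⁻¹ = 1 := Matrix.mul_nonsing_inv P hdet
  have h2 : P⁻¹ * P = 1 := Matrix.nonsing_inv_mul P hdet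
  refine ⟨⟨Matrix.fromBlocks 1 0 0 P⁻¹, Matrix.fromBlocks 1 0 0 P, ?_, ?_⟩, ?_⟩
  · rw [Matrix.fromBlocks_multiply]
    simp [h2, ← Matrix.fromBlocks_one]
  · rw [Matrix.fromBlocks_multiply]
    simp [h1, ← Matrix.fromBlocks_one]
  · show Matrix.fromBlocks 1 0 0 P⁻¹ *
        Matrix.fromBlocks (Jcell n lam) 0 0 ((Jcell n lam)⁻¹) *
        Matrix.fromBlocks 1 0 0 P = _
    rw [JordanAux.Binv_eq_inv n lam hlam]
    have key : P⁻¹ * JordanAux.Binv n lam * P = Jcell n lam⁻¹ := by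
      rw [Matrix.mul_assoc, JordanAux2.Binv_mul_Pmat n lam hn0, ← Matrix.mul_assoc, h2,
        Matrix.one_mul]
    rw [Matrix.fromBlocks_multiply, Matrix.fromBlocks_multiply]
    simp [key, Matrix.mul_assoc]
end

section
/- (Lemma 6, special case λ = λ⁻¹) For n ≥ 1 and λ ∈ {1, −1}, the 2n×2n block-diagonal matrix J_{n,λ} ⊕ J_{n,λ}⁻¹ is similar to J_{n,λ} ⊕ J_{n,λ}: there exists an invertible Q ∈ M_{2n}(ℂ) with Q · (J_{n,λ} ⊕ J_{n,λ}⁻¹) · Q⁻¹ = J_{n,λ} ⊕ J_{n,λ}. -/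
open Matrix

/-- Entries of the conjugating matrix, as a function on ℕ. -/
noncomputable def pfun (n : ℕ) (lam : ℂ) : ℕ → ℕ → ℂ := fun i j =>
  if i ≤ j then (-lam)^i * lam^j * ((n - 2 - i).choose (j - i) : ℂ) else 0

/-- The conjugating matrix `P` with `J P J = P`. -/
noncomputable def Pmat (n : ℕ) (lam : ℂ) : Matrix (Fin n) (Fin n) ℂ :=
  Matrix.of fun i j => pfun n lam (i : ℕ) (j : ℕ)

lemma Mblock_mul_apply {n : ℕ} (A : Matrix (Fin n) (Fin n) ℂ) (i j : Fin n) :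
    (Mblock n * A) i j = if h : (i : ℕ) + 1 < n then A ⟨(i : ℕ) + 1, h⟩ j else 0 := by
  rw [Matrix.mul_apply]
  split
  · next h =>
    rw [Finset.sum_eq_single (⟨(i : ℕ) + 1, h⟩ : Fin n)]
    · simp [Mblock]
    · intro k _ hk
      have : (k : ℕ) ≠ (i : ℕ) + 1 := by
        intro hc; exact hk (Fin.ext hc)
      simp [Mblock, this]
    · simp
  · next h =>
    apply Finset.sum_eq_zero
    intro k _
    have : (k : ℕ) ≠ (i : ℕ) + 1 := by
      have := k.isLt; omega
    simp [Mblock, this]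

lemma mul_Mblock_apply {n : ℕ} (A : Matrix (Fin n) (Fin n) ℂ) (i j : Fin n) :
    (A * Mblock n) i j =
      if 0 < (j : ℕ) then A i ⟨(j : ℕ) - 1, lt_of_le_of_lt (Nat.sub_le _ _) j.isLt⟩ else 0 := by
  rw [Matrix.mul_apply]
  split
  · next h =>
    rw [Finset.sum_eq_single (⟨(j : ℕ) - 1, lt_of_le_of_lt (Nat.sub_le _ _) j.isLt⟩ : Fin n)]
    · have : (j : ℕ) = (j : ℕ) - 1 + 1 := by omega
      simp [Mblock, ← this]
    · intro k _ hk
      have : (j : ℕ) ≠ (k : ℕ) + 1 := by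
        intro hc
        exact hk (Fin.ext (show (k : ℕ) = (j : ℕ) - 1 by omega))
      simp [Mblock, this]
    · simp
  · next h =>
    apply Finset.sum_eq_zero
    intro k _
    have : (j : ℕ) ≠ (k : ℕ) + 1 := by omega
    simp [Mblock, this]

lemma pfun_zero_of_lt {n : ℕ} (lam : ℂ) {i j : ℕ} (hji : j < i) : pfun n lam i j = 0 :=
  if_neg (by omega)

lemma Mblock_mul_P {n : ℕ} (lam : ℂ) (i j : Fin n) :
    (Mblock n * Pmat n lam) i j = pfun n lam ((i : ℕ) + 1) (j : ℕ) := by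
  rw [Mblock_mul_apply]
  split
  · rfl
  · next h =>
    rw [pfun_zero_of_lt]
    have := j.isLt; omega

lemma P_mul_M {n : ℕ} (lam : ℂ) (i j : Fin n) :
    (Pmat n lam * Mblock n) i j = if 0 < (j : ℕ) then pfun n lam (i : ℕ) ((j : ℕ) - 1) else 0 := by
  rw [mul_Mblock_apply]
  split <;> rfl

lemma MPM {n : ℕ} (lam : ℂ) (i j : Fin n) :
    (Mblock n * Pmat n lam * Mblock n) i j =
      if 0 < (j : ℕ) then pfun n lam ((i : ℕ) + 1) ((j : ℕ) - 1) else 0 := by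
  rw [mul_Mblock_apply]
  split
  · rw [Mblock_mul_P]
  · rfl

lemma pfun_key (n : ℕ) (lam : ℂ) (h2 : lam * lam = 1) (i j : ℕ) (hj : j < n) :
    lam * pfun n lam (i+1) j
      + lam * (if 0 < j then pfun n lam i (j-1) else 0)
      + (if 0 < j then pfun n lam (i+1) (j-1) else 0) = 0 := by
  unfold pfun
  by_cases hj0 : 0 < j
  · simp only [if_pos hj0]
    by_cases hij : i + 1 ≤ j
    · rcases eq_or_lt_of_le hij with he | hlt
      · -- j = i + 1
        rw [if_pos hij, if_pos (by omega : i ≤ j - 1), if_neg (by omega : ¬ i + 1 ≤ j - 1)]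
        have e3 : j - (i+1) = 0 := by omega
        have e4 : j - 1 - i = 0 := by omega
        rw [e3, e4, Nat.choose_zero_right, Nat.choose_zero_right]
        have hj1 : lam ^ j = lam ^ (j-1) * lam := by
          rw [← pow_succ]; congr 1; omega
        rw [hj1, pow_succ]
        push_cast
        linear_combination (-((-lam)^i * lam^(j-1) * lam)) * h2
      · -- i + 2 ≤ j
        rw [if_pos hij, if_pos (by omega : i ≤ j - 1), if_pos (by omega : i + 1 ≤ j - 1)]
        have h3 : i + 3 ≤ n := by omega
        have e1 : n - 2 - i = (n - 3 - i) + 1 := by omega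
        have e2 : n - 2 - (i+1) = n - 3 - i := by omega
        have e3 : j - (i+1) = (j - 2 - i) + 1 := by omega
        have e4 : j - 1 - i = (j - 2 - i) + 1 := by omega
        have e5 : j - 1 - (i+1) = j - 2 - i := by omega
        rw [e1, e2, e3, e4, e5, Nat.choose_succ_succ]
        have hj1 : lam ^ j = lam ^ (j-1) * lam := by
          rw [← pow_succ]; congr 1; omega
        rw [hj1, pow_succ]
        push_cast
        linear_combination (-((-lam)^i * lam^(j-1) * ((n - 3 - i).choose ((j - 2 - i) + 1) : ℂ) * lam)) * h2
    · -- j ≤ i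
      rw [if_neg hij, if_neg (by omega : ¬ i ≤ j - 1), if_neg (by omega : ¬ i + 1 ≤ j - 1)]
      ring
  · simp only [if_neg hj0]
    rw [if_neg (by omega : ¬ i + 1 ≤ j)]
    ring

lemma JPJ (n : ℕ) (lam : ℂ) (h2 : lam * lam = 1) :
    Jcell n lam * Pmat n lam * Jcell n lam = Pmat n lam := by
  have expand : Jcell n lam * Pmat n lam * Jcell n lam =
      (lam * lam) • Pmat n lam + (lam • (Mblock n * Pmat n lam)
        + lam • (Pmat n lam * Mblock n) + Mblock n * Pmat n lam * Mblock n) := by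
    simp only [Jcell, Matrix.add_mul, Matrix.mul_add, Matrix.smul_mul, Matrix.mul_smul,
      Matrix.one_mul, Matrix.mul_one, smul_add, smul_smul]
    abel
  rw [expand, h2, one_smul]
  have hzero : lam • (Mblock n * Pmat n lam) + lam • (Pmat n lam * Mblock n)
      + Mblock n * Pmat n lam * Mblock n = 0 := by
    ext i j
    simp only [Matrix.add_apply, Matrix.smul_apply, smul_eq_mul, Matrix.zero_apply]
    rw [Mblock_mul_P, P_mul_M, MPM]
    exact pfun_key n lam h2 i j j.isLt
  rw [hzero, add_zero]

lemma Pmat_det_isUnit (n : ℕ) (lam : ℂ) (h2 : lam * lam = 1) : IsUnit (Pmat n lam).det := by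
  have htri : (Pmat n lam).BlockTriangular id := by
    intro i j hji
    exact pfun_zero_of_lt lam hji
  rw [Matrix.det_of_upperTriangular htri]
  have hdiag : ∀ i : Fin n, Pmat n lam i i = (-1 : ℂ) ^ (i : ℕ) := by
    intro i
    show pfun n lam (i : ℕ) (i : ℕ) = _
    unfold pfun
    rw [if_pos le_rfl, Nat.sub_self, Nat.choose_zero_right]
    push_cast
    rw [mul_one, ← mul_pow]
    congr 1
    rw [neg_mul, h2]
  rw [isUnit_iff_ne_zero]
  apply Finset.prod_ne_zero_iff.2
  intro i _
  rw [hdiag]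
  exact pow_ne_zero _ (by norm_num)

lemma Jcell_det_isUnit (n : ℕ) (lam : ℂ) (hlam0 : lam ≠ 0) : IsUnit (Jcell n lam).det := by
  have htri : (Jcell n lam).BlockTriangular id := by
    intro i j hji
    have h1 : ¬ i = j := by
      intro h; subst h; exact lt_irrefl _ hji
    have h2 : (j : ℕ) ≠ (i : ℕ) + 1 := by
      have : (j : ℕ) < (i : ℕ) := hji
      omega
    simp [Jcell, Mblock, Matrix.one_apply, h1, h2]
  rw [Matrix.det_of_upperTriangular htri]
  have hdiag : ∀ i : Fin n, Jcell n lam i i = lam := by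
    intro i
    simp [Jcell, Mblock, Matrix.one_apply]
  rw [isUnit_iff_ne_zero]
  apply Finset.prod_ne_zero_iff.2
  intro i _
  rw [hdiag]
  exact hlam0

/-- (Lemma 6, special case `λ = λ⁻¹`) For `λ ∈ {1, -1}`, the block-diagonal matrix
`J_{n,λ} ⊕ J_{n,λ}⁻¹` is similar to `J_{n,λ} ⊕ J_{n,λ}`. -/
theorem blockDiag_jcell_inv_similar_self (n : ℕ) (hn : 1 ≤ n) (lam : ℂ)
    (hlam : lam = 1 ∨ lam = -1) :
    ∃ Q : GL (Fin n ⊕ Fin n) ℂ,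
      (Q : Matrix (Fin n ⊕ Fin n) (Fin n ⊕ Fin n) ℂ) *
          Matrix.fromBlocks (Jcell n lam) 0 0 ((Jcell n lam)⁻¹) *
          ((Q⁻¹ : GL (Fin n ⊕ Fin n) ℂ) : Matrix (Fin n ⊕ Fin n) (Fin n ⊕ Fin n) ℂ) =
        Matrix.fromBlocks (Jcell n lam) 0 0 (Jcell n lam) := by
  have h2 : lam * lam = 1 := by rcases hlam with h | h <;> rw [h] <;> ring
  have hlam0 : lam ≠ 0 := by rcases hlam with h | h <;> rw [h] <;> norm_num
  set J := Jcell n lam with hJdef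
  set P := Pmat n lam with hPdef
  have hJ : IsUnit J.det := Jcell_det_isUnit n lam hlam0
  have hP : IsUnit P.det := Pmat_det_isUnit n lam h2
  have hJPJ : J * P * J = P := JPJ n lam h2
  have hPJ : P * J = J⁻¹ * P := by
    calc P * J = J⁻¹ * J * (P * J) := by rw [Matrix.nonsing_inv_mul J hJ, Matrix.one_mul]
      _ = J⁻¹ * (J * P * J) := by rw [Matrix.mul_assoc J P J, Matrix.mul_assoc]
      _ = J⁻¹ * P := by rw [hJPJ]
  have hfinal : P⁻¹ * J⁻¹ * P = J := by
    rw [Matrix.mul_assoc, ← hPJ, ← Matrix.mul_assoc, Matrix.nonsing_inv_mul P hP,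
      Matrix.one_mul]
  refine ⟨⟨Matrix.fromBlocks 1 0 0 P⁻¹, Matrix.fromBlocks 1 0 0 P, ?_, ?_⟩, ?_⟩
  · rw [Matrix.fromBlocks_multiply]
    simp [Matrix.nonsing_inv_mul P hP]
  · rw [Matrix.fromBlocks_multiply]
    simp [Matrix.mul_nonsing_inv P hP]
  · show Matrix.fromBlocks 1 0 0 P⁻¹ * Matrix.fromBlocks J 0 0 J⁻¹ * Matrix.fromBlocks 1 0 0 P
      = Matrix.fromBlocks J 0 0 J
    rw [Matrix.fromBlocks_multiply, Matrix.fromBlocks_multiply]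
    simp only [Matrix.mul_zero, Matrix.zero_mul, Matrix.mul_one, Matrix.one_mul,
      add_zero, zero_add]
    rw [hfinal]
end
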